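/- Let m = 1, let n ∈ {3, 4, 6}, and let r be a positive integer. If a prime p divides D_{m,n,r}, then p ≡ n − 1 (mod n) and v_p(D_{m,n,r}) ≤ ⌊log(nr)/(2·log p) + 1/2⌋. -/

import Mathlib

open Polynomial in
/-- The hypergeometric polynomial
`Y_{m,n,r}(z) = ₂F₁(−r, −r−m/n; 1−m/n; z)
  = ∑_{h=0}^{r} C(r,h) · (∏_{i=r−h+1}^{r} (in+m))/(∏_{i=1}^{h} (in−m)) · z^h`. -/
noncomputable def hyperY (m n r : ℕ) : Polynomial ℚ :=
  ∑ h ∈ Finset.range (r + 1),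
    C ((r.choose h : ℚ) *
        (∏ i ∈ Finset.Icc (r - h + 1) r, ((i : ℚ) * n + m)) /
        (∏ i ∈ Finset.Icc 1 h, ((i : ℚ) * n - m))) * X ^ h

open Polynomial in
/-- The hypergeometric polynomial
`X_{m,n,r}(z) = z^r·₂F₁(−r, −r−m/n; 1−m/n; 1/z)
  = ∑_{h=0}^{r} C(r,h) · (∏_{i=r−h+1}^{r} (in+m))/(∏_{i=1}^{h} (in−m)) · z^{r−h}`. -/
noncomputable def hyperX (m n r : ℕ) : Polynomial ℚ :=
  ∑ h ∈ Finset.range (r + 1),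
    C ((r.choose h : ℚ) *
        (∏ i ∈ Finset.Icc (r - h + 1) r, ((i : ℚ) * n + m)) /
        (∏ i ∈ Finset.Icc 1 h, ((i : ℚ) * n - m))) * X ^ (r - h)

/-- `D_{m,n,r}`: the smallest positive integer `D` such that `D·Y_{m,n,r}`
has integer coefficients. -/
noncomputable def hyperD (m n r : ℕ) : ℕ :=
  sInf {D : ℕ | 0 < D ∧ ∀ h : ℕ, ((D : ℚ) * (hyperY m n r).coeff h).den = 1}

/-!
For `h ≤ r` the coefficient of `z^h` in `Y_{1,n,r}` is
`C(r,h) · ∏_{r-h<i≤r} (in+1) / ∏_{1≤i≤h} (in-1)`, and `D_{1,n,r}` is the lcm of the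
denominators. Fix `q = p^e`. If `n` is invertible mod `q`, with inverse `u`, then the `i ≤ h`
with `q ∣ in-1` form the class `i ≡ u` and the `i ∈ (r-h, r]` with `q ∣ in+1` the class
`i ≡ -u`. Counting these classes and adding the carry from Kummer's theorem, level `e` can
contribute at most one factor `p` to the denominator, and only when `2u < q ≤ nu - 1`.
For `n ∈ {3, 4, 6}` this forces `q = nu - 1 < nr`, so `p^e ≡ -1 (mod n)`. Every unit of `ℤ/n`
squares to `1`, so `p ≡ -1 (mod n)` and `e` is odd. Hence `v_p(D)` is at most the number of odd
`e` with `p^e < nr`.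
-/

open Finset Polynomial

theorem Rat.natCast_mul_den_eq_one_iff {D : ℕ} (x : ℚ) :
    ((D : ℚ) * x).den = 1 ↔ x.den ∣ D := by
  have hx : (D : ℚ) * x = ((D * x.num : ℤ) : ℚ) / ((x.den : ℤ) : ℚ) := by
    push_cast; rw [mul_div_assoc, Rat.num_div_den]
  rw [hx, Rat.den_div_intCast_eq_one_iff _ _ (by exact_mod_cast x.den_ne_zero),
    ← Int.natCast_dvd_natCast]
  have hcop : IsCoprime (x.den : ℤ) x.num := by
    rw [Int.isCoprime_iff_gcd_eq_one, Int.gcd_comm]; exact x.reduced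
  exact ⟨hcop.dvd_of_dvd_mul_right, fun h => dvd_mul_of_dvd_left h _⟩

theorem sInf_den_coeff_eq_lcm (P : ℚ[X]) :
    sInf {D : ℕ | 0 < D ∧ ∀ h, ((D : ℚ) * P.coeff h).den = 1} =
      P.support.lcm fun h => (P.coeff h).den := by
  set L := P.support.lcm fun h => (P.coeff h).den
  have hL : 0 < L := Nat.pos_of_ne_zero (by simp [L, Finset.lcm_eq_zero_iff])
  have hmem : ∀ D : ℕ, (0 < D ∧ ∀ h, ((D : ℚ) * P.coeff h).den = 1) ↔ 0 < D ∧ L ∣ D := by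
    intro D
    simp only [Rat.natCast_mul_den_eq_one_iff, L, Finset.lcm_dvd_iff]
    refine and_congr_right fun _ => ⟨fun h i _ => h i, fun h i => ?_⟩
    by_cases hi : i ∈ P.support
    · exact h i hi
    · simp [Polynomial.notMem_support_iff.mp hi]
  refine le_antisymm (Nat.sInf_le ((hmem L).mpr ⟨hL, dvd_rfl⟩)) ?_
  exact le_csInf ⟨L, (hmem L).mpr ⟨hL, dvd_rfl⟩⟩
    fun D hD => Nat.le_of_dvd ((hmem D).mp hD).1 ((hmem D).mp hD).2

theorem padicValNat_den_div_le (p : ℕ) [Fact p.Prime] {N B : ℕ} (hN : N ≠ 0) (hB : B ≠ 0) :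
    padicValNat p ((N : ℚ) / B).den ≤ padicValNat p B - padicValNat p N := by
  have hden : ((N : ℚ) / B).den = B / B.gcd N := by
    rw [← Int.cast_natCast N, ← Rat.mkRat_eq_div, Rat.den_mkRat, if_neg hB, Int.natAbs_natCast]
  rw [hden, padicValNat.div_of_dvd (Nat.gcd_dvd_left B N)]
  simp only [← Nat.factorization_def _ Fact.out, Nat.factorization_gcd hB hN, Finsupp.inf_apply]
  omega

theorem padicValNat_prod_eq_sum_card {p b : ℕ} [Fact p.Prime] {ι : Type*} (s : Finset ι)
    (f : ι → ℕ) (hf : ∀ i ∈ s, f i ≠ 0) (hb : ∀ i ∈ s, f i < p ^ b) :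
    padicValNat p (∏ i ∈ s, f i) = ∑ e ∈ Ico 1 b, #{i ∈ s | p ^ e ∣ f i} := by
  rw [← Nat.factorization_def _ Fact.out, Nat.factorization_prod hf, Finsupp.finsetSum_apply]
  simp_rw [card_filter]
  rw [Finset.sum_comm]
  refine Finset.sum_congr rfl fun i hi => ?_
  rw [Nat.factorization_eq_card_pow_dvd_of_lt Fact.out (Nat.pos_of_ne_zero (hf i hi)) (hb i hi),
    card_filter]

theorem card_filter_dvd_add_Ioc (q c : ℕ) {L M : ℕ} (hLM : L ≤ M) :
    #{i ∈ Ioc L M | q ∣ i + c} = (M + c) / q - (L + c) / q := by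
  induction M, hLM using Nat.le_induction with
  | base => simp
  | succ M hLM ih =>
    have hmono : (L + c) / q ≤ (M + c) / q := Nat.div_le_div_right (by omega)
    rw [← Finset.insert_Ioc_right_eq_Ioc_add_one hLM, filter_insert, add_right_comm, Nat.succ_div]
    split_ifs
    · rw [card_insert_of_notMem (by simp), ih]; omega
    · rw [ih]; omega

theorem ZMod.natCast_eq_neg_one_iff {n : ℕ} [NeZero n] (a : ℕ) :
    (a : ZMod n) = -1 ↔ a % n = n - 1 := by
  obtain ⟨k, rfl⟩ := Nat.exists_eq_succ_of_ne_zero (NeZero.ne n)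
  rw [← (ZMod.val_injective _).eq_iff, ZMod.val_natCast, ZMod.val_neg_one, Nat.succ_sub_one]

section Residues

variable {q n u : ℕ}

theorem dvd_mul_sub_one_iff (hu : n * u ≡ 1 [MOD q]) (huq : u ≤ q) {i : ℕ} (hi : 1 ≤ i * n) :
    q ∣ i * n - 1 ↔ q ∣ i + (q - u) := by
  have hnu : (n : ZMod q) * u = 1 := by exact_mod_cast (ZMod.natCast_eq_natCast_iff _ _ _).mpr hu
  rw [← ZMod.natCast_eq_zero_iff, ← ZMod.natCast_eq_zero_iff]
  push_cast [Nat.cast_sub hi, Nat.cast_sub huq, ZMod.natCast_self]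
  constructor <;> intro h
  · linear_combination (u : ZMod q) * h - i * hnu
  · linear_combination (n : ZMod q) * h + hnu

theorem dvd_mul_add_one_iff (hu : n * u ≡ 1 [MOD q]) {i : ℕ} :
    q ∣ i * n + 1 ↔ q ∣ i + u := by
  have hnu : (n : ZMod q) * u = 1 := by exact_mod_cast (ZMod.natCast_eq_natCast_iff _ _ _).mpr hu
  rw [← ZMod.natCast_eq_zero_iff, ← ZMod.natCast_eq_zero_iff]
  push_cast
  constructor <;> intro h
  · linear_combination (u : ZMod q) * h - i * hnu
  · linear_combination (n : ZMod q) * h - hnu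

theorem card_filter_dvd_mul_sub_one (hn : 1 ≤ n) (hu : n * u ≡ 1 [MOD q]) (hu1 : 1 ≤ u)
    (huq : u < q) (h : ℕ) : #{i ∈ Icc 1 h | q ∣ i * n - 1} = (h + (q - u)) / q := by
  rw [show Icc 1 h = Ioc 0 h from Icc_add_one_left_eq_Ioc 0 h,
    filter_congr fun i hi => dvd_mul_sub_one_iff hu huq.le (Nat.mul_pos (by simp only [mem_Ioc] at hi; omega) hn),
    card_filter_dvd_add_Ioc _ _ (Nat.zero_le h), zero_add, Nat.div_eq_of_lt (by omega : q - u < q),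
    Nat.sub_zero]

theorem card_filter_dvd_mul_add_one (hu : n * u ≡ 1 [MOD q]) (h r : ℕ) :
    #{i ∈ Icc (r - h + 1) r | q ∣ i * n + 1} = (r + u) / q - (r - h + u) / q := by
  rw [Icc_add_one_left_eq_Ioc, filter_congr fun i _ => dvd_mul_add_one_iff hu,
    card_filter_dvd_add_Ioc _ _ (Nat.sub_le r h)]

end Residues

theorem div_add_sub_le_sub_div_add_carry {q u h r : ℕ} (huq : u < q) (hh : h ≤ r) :
    (h + (q - u)) / q ≤ (r + u) / q - (r - h + u) / q
      + (if q ≤ h % q + (r - h) % q then 1 else 0)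
      + (if 2 * u < q ∧ u ≤ h then 1 else 0) := by
  have hq : 0 < q := by omega
  obtain ⟨a, b, hb, rfl⟩ : ∃ a b, b < q ∧ h = b + q * a :=
    ⟨h / q, h % q, Nat.mod_lt _ hq, (Nat.mod_add_div _ _).symm⟩
  obtain ⟨c, d, hd, hrh⟩ : ∃ c d, d < q ∧ r - (b + q * a) = d + q * c :=
    ⟨_, _, Nat.mod_lt _ hq, (Nat.mod_add_div _ _).symm⟩
  rw [hrh, show r + u = b + d + u + q * a + q * c by omega,
    show b + q * a + (q - u) = b + (q - u) + q * a by omega,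
    show d + q * c + u = d + u + q * c by omega]
  simp only [Nat.add_mul_div_left _ _ hq, Nat.add_mul_mod_self_left, Nat.mod_eq_of_lt hb,
    Nat.mod_eq_of_lt hd]
  -- each remaining quotient is `0`, `1` or `2`; once it is fixed, everything is linear
  have h₁ := Nat.lt_div_mul_add (a := b + (q - u)) hq
  have h₂ := Nat.lt_div_mul_add (a := d + u) hq
  have h₃ := Nat.lt_div_mul_add (a := b + d + u) hq
  have h₁' := Nat.div_mul_le_self (b + (q - u)) q
  have h₂' := Nat.div_mul_le_self (d + u) q
  have h₃' := Nat.div_mul_le_self (b + d + u) q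
  have hk₁ : (b + (q - u)) / q < 2 := Nat.div_lt_of_lt_mul (by omega)
  have hk₂ : (d + u) / q < 2 := Nat.div_lt_of_lt_mul (by omega)
  have hk₃ : (b + d + u) / q < 3 := Nat.div_lt_of_lt_mul (by omega)
  generalize (b + (q - u)) / q = k₁ at *
  generalize (d + u) / q = k₂ at *
  generalize (b + d + u) / q = k₃ at *
  interval_cases k₁ <;> interval_cases k₂ <;> interval_cases k₃ <;> split_ifs <;> omega

def exceptionalExponents (n p r : ℕ) : Finset ℕ :=
  {e ∈ Ico 1 (n * r + 1) | ((p ^ e : ℕ) : ZMod n) = -1 ∧ p ^ e < n * r}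

section ThreeFourSix

variable {n : ℕ}

theorem add_one_eq_mul_of_modEq_one (hn : n ∈ ({3, 4, 6} : Set ℕ)) {q u : ℕ} (hu : 1 ≤ u)
    (hnu : n * u ≡ 1 [MOD q]) (h2u : 2 * u < q) : q + 1 = n * u := by
  simp only [Set.mem_insert_iff, Set.mem_singleton_iff] at hn
  have hmod : n * u % q = 1 := by rw [hnu, Nat.mod_eq_of_lt (by omega)]
  have hdiv := Nat.div_add_mod (n * u) q
  have hw : n * u / q < 3 := Nat.div_lt_of_lt_mul (by rcases hn with rfl | rfl | rfl <;> omega)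
  generalize n * u / q = w at *
  interval_cases w <;> rcases hn with rfl | rfl | rfl <;> omega

theorem ZMod.sq_eq_one_of_mul_eq_neg_one (hn : n ∈ ({3, 4, 6} : Set ℕ)) {x y : ZMod n}
    (h : x * y = -1) : x ^ 2 = 1 := by
  simp only [Set.mem_insert_iff, Set.mem_singleton_iff] at hn
  rcases hn with rfl | rfl | rfl <;> revert x y <;> decide

theorem ZMod.eq_neg_one_and_odd_of_pow_eq_neg_one (hn : n ∈ ({3, 4, 6} : Set ℕ))
    {x : ZMod n} {e : ℕ} (h : x ^ e = -1) : x = -1 ∧ Odd e := by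
  have : Fact (2 < n) := ⟨by simp only [Set.mem_insert_iff, Set.mem_singleton_iff] at hn; omega⟩
  obtain _ | k := e
  · exact absurd h.symm (by simpa using ZMod.neg_one_ne_one)
  have hsq : x ^ 2 = 1 :=
    ZMod.sq_eq_one_of_mul_eq_neg_one hn (y := x ^ k) (by rw [← pow_succ']; exact h)
  obtain ⟨j, hj | hj⟩ := Nat.even_or_odd' (k + 1)
  · rw [hj, pow_mul, hsq, one_pow] at h
    exact absurd h.symm ZMod.neg_one_ne_one
  · rw [hj, pow_succ, pow_mul, hsq, one_pow, one_mul] at h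
    exact ⟨h, hj ▸ odd_two_mul_add_one j⟩

theorem card_filter_dvd_mul_sub_one_le (hn : n ∈ ({3, 4, 6} : Set ℕ)) {q r h : ℕ} (hq : 2 ≤ q)
    (hh : h ≤ r) :
    #{i ∈ Icc 1 h | q ∣ i * n - 1} ≤ #{i ∈ Icc (r - h + 1) r | q ∣ i * n + 1}
      + (if q ≤ h % q + (r - h) % q then 1 else 0)
      + (if (q : ZMod n) = -1 ∧ q < n * r then 1 else 0) := by
  have hn1 : 1 ≤ n := by
    simp only [Set.mem_insert_iff, Set.mem_singleton_iff] at hn; omega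
  by_cases hinv : ∃ u, n * u ≡ 1 [MOD q]
  swap
  · suffices #{i ∈ Icc 1 h | q ∣ i * n - 1} = 0 by omega
    refine card_eq_zero.mpr (filter_eq_empty_iff.mpr fun i hi hdvd => hinv ⟨i, ?_⟩)
    have hi : 1 ≤ i * n := Nat.mul_pos (by simp only [mem_Icc] at hi; omega) hn1
    rw [mul_comm]
    exact ((Nat.modEq_iff_dvd' hi).mpr hdvd).symm
  obtain ⟨u', hu'⟩ := hinv
  set u := u' % q
  have hu : n * u ≡ 1 [MOD q] := ((Nat.mod_modEq u' q).mul_left n).trans hu'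
  have huq : u < q := Nat.mod_lt _ (by omega)
  have hu1 : 1 ≤ u := Nat.pos_of_ne_zero fun h0 => by
    simp [h0, Nat.ModEq, Nat.mod_eq_of_lt hq] at hu
  have hexc : 2 * u < q ∧ u ≤ h → (q : ZMod n) = -1 ∧ q < n * r := by
    rintro ⟨h2u, huh⟩
    have hq1 := add_one_eq_mul_of_modEq_one hn hu1 hu h2u
    have hq1' : ((q + 1 : ℕ) : ZMod n) = 0 := by rw [hq1, Nat.cast_mul, ZMod.natCast_self, zero_mul]
    have := Nat.mul_le_mul_left n (huh.trans hh)
    exact ⟨eq_neg_of_add_eq_zero_left (by exact_mod_cast hq1'), by omega⟩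
  rw [card_filter_dvd_mul_sub_one hn1 hu hu1 huq, card_filter_dvd_mul_add_one hu]
  refine (div_add_sub_le_sub_div_add_carry huq hh).trans (Nat.add_le_add_left ?_ _)
  split_ifs with hsmall hcong <;> first | omega | exact absurd (hexc hsmall) hcong

theorem padicValNat_prod_mul_sub_one_le (hn : n ∈ ({3, 4, 6} : Set ℕ)) {p r h : ℕ}
    [Fact p.Prime] (hh : h ≤ r) :
    padicValNat p (∏ i ∈ Icc 1 h, (i * n - 1)) ≤
      padicValNat p (∏ i ∈ Icc (r - h + 1) r, (i * n + 1)) + padicValNat p (r.choose h)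
        + #(exceptionalExponents n p r) := by
  have hn3 : 3 ≤ n := by
    simp only [Set.mem_insert_iff, Set.mem_singleton_iff] at hn; omega
  have hp := (Fact.out : p.Prime)
  have hbound : ∀ x ≤ n * r + 1, x < p ^ (n * r + 1) := fun x hx =>
    (hx.trans_lt Nat.lt_two_pow_self).trans_le (Nat.pow_le_pow_left hp.two_le _)
  have hfactor : ∀ i ≤ r, i * n ≤ n * r := fun i hi => by
    rw [mul_comm]; exact Nat.mul_le_mul_left n hi
  rw [padicValNat_prod_eq_sum_card _ _
      (fun i hi => by simp only [mem_Icc] at hi; have := Nat.mul_le_mul hi.1 hn3; omega)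
      (fun i hi => hbound _ (by simp only [mem_Icc] at hi; have := hfactor i (by omega); omega)),
    padicValNat_prod_eq_sum_card _ _ (fun i _ => by omega)
      (fun i hi => hbound _ (by simp only [mem_Icc] at hi; have := hfactor i hi.2; omega)),
    padicValNat_choose hh ((Nat.log_le_self p r).trans_lt
      (Nat.lt_succ_of_le (Nat.le_mul_of_pos_left r (show 0 < n by omega)))),
    exceptionalExponents, card_filter, card_filter, ← sum_add_distrib, ← sum_add_distrib]
  refine sum_le_sum fun e he => card_filter_dvd_mul_sub_one_le hn ?_ hh
  exact Nat.one_lt_pow (n := e) (by simp only [mem_Ico] at he; omega) hp.one_lt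

end ThreeFourSix

theorem hyperY_coeff_of_le (m n : ℕ) {r h : ℕ} (hh : h ≤ r) :
    (hyperY m n r).coeff h = (r.choose h : ℚ) *
        (∏ i ∈ Icc (r - h + 1) r, ((i : ℚ) * n + m)) / (∏ i ∈ Icc 1 h, ((i : ℚ) * n - m)) := by
  simp only [hyperY, finsetSum_coeff, coeff_C_mul, coeff_X_pow, mul_ite, mul_one, mul_zero,
    sum_ite_eq, mem_range]
  rw [if_pos (by omega)]

theorem hyperY_one_coeff_of_le {n r h : ℕ} (hn : 1 ≤ n) (hh : h ≤ r) :
    (hyperY 1 n r).coeff h =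
      ((r.choose h * ∏ i ∈ Icc (r - h + 1) r, (i * n + 1) : ℕ) : ℚ) /
        ((∏ i ∈ Icc 1 h, (i * n - 1) : ℕ) : ℚ) := by
  rw [hyperY_coeff_of_le 1 n hh]
  push_cast
  congr 1
  refine prod_congr rfl fun i hi => ?_
  rw [Nat.cast_sub (Nat.one_le_iff_ne_zero.mpr (Nat.mul_ne_zero (by simp only [mem_Icc] at hi; omega) (by omega)))]
  push_cast; ring

theorem hyperY_coeff_eq_zero_of_lt (m n : ℕ) {r h : ℕ} (hh : r < h) :
    (hyperY m n r).coeff h = 0 := by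
  simp only [hyperY, finsetSum_coeff, coeff_C_mul, coeff_X_pow, mul_ite, mul_one, mul_zero,
    sum_ite_eq, mem_range]
  rw [if_neg (by omega)]

theorem padicValNat_den_coeff_hyperY_le {n p r : ℕ} [Fact p.Prime]
    (hn : n ∈ ({3, 4, 6} : Set ℕ)) (h : ℕ) :
    padicValNat p ((hyperY 1 n r).coeff h).den ≤
      #(exceptionalExponents n p r) := by
  have hn3 : 3 ≤ n := by
    simp only [Set.mem_insert_iff, Set.mem_singleton_iff] at hn; omega
  rcases le_or_gt h r with hh | hh
  · have hA : ∏ i ∈ Icc (r - h + 1) r, (i * n + 1) ≠ 0 := prod_ne_zero_iff.mpr fun _ _ => by omega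
    have hB : ∏ i ∈ Icc 1 h, (i * n - 1) ≠ 0 := prod_ne_zero_iff.mpr fun i hi => by
      simp only [mem_Icc] at hi; have := Nat.mul_le_mul hi.1 hn3; omega
    rw [hyperY_one_coeff_of_le (by omega) hh]
    refine (padicValNat_den_div_le p (Nat.mul_ne_zero (Nat.choose_ne_zero hh) hA) hB).trans ?_
    rw [padicValNat.mul (Nat.choose_ne_zero hh) hA]
    have := padicValNat_prod_mul_sub_one_le (p := p) hn hh
    omega
  · simp [hyperY_coeff_eq_zero_of_lt 1 n hh]

theorem hyperD_eq_lcm (m n r : ℕ) :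
    hyperD m n r = (hyperY m n r).support.lcm fun h => ((hyperY m n r).coeff h).den :=
  sInf_den_coeff_eq_lcm _

theorem hyperD_ne_zero (m n r : ℕ) : hyperD m n r ≠ 0 := by
  simp [hyperD_eq_lcm, Finset.lcm_eq_zero_iff]

theorem padicValNat_hyperD_le {n p : ℕ} [Fact p.Prime] (hn : n ∈ ({3, 4, 6} : Set ℕ)) (r : ℕ) :
    padicValNat p (hyperD 1 n r) ≤
      #(exceptionalExponents n p r) := by
  rw [hyperD_eq_lcm, ← Nat.factorization_def _ Fact.out,
    Finset.factorization_lcm fun _ _ => Rat.den_ne_zero _]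
  exact Finset.sup_le fun h _ =>
    (Nat.factorization_def _ Fact.out).trans_le (padicValNat_den_coeff_hyperY_le hn h)

theorem card_le_floor_of_odd_of_pow_lt {p N : ℕ} (hp : 1 < p) (s : Finset ℕ)
    (hs : ∀ e ∈ s, Odd e ∧ p ^ e < N) :
    (#s : ℤ) ≤ ⌊Real.log N / (2 * Real.log p) + 1 / 2⌋ := by
  have hlogp : 0 < Real.log p := Real.log_pos (by exact_mod_cast hp)
  have hx : 0 ≤ Real.log N / (2 * Real.log p) + 1 / 2 := by
    have := Real.log_natCast_nonneg N
    positivity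
  rw [← Int.natCast_floor_eq_floor hx, Nat.cast_le]
  -- the `k`-th odd exponent `2k - 1` is admissible exactly when `k ≤ log N / (2 log p) + 1/2`
  refine (card_le_card_of_injOn (fun e => (e + 1) / 2) (t := Icc 1 _) ?_ ?_).trans
    (by rw [Nat.card_Icc, Nat.add_sub_cancel])
  · intro e he
    obtain ⟨⟨k, rfl⟩, hlt⟩ := hs e he
    have hlog : ((2 * k + 1 : ℕ) : ℝ) * Real.log p < Real.log N := by
      rw [← Real.log_pow]
      exact Real.log_lt_log (by positivity) (by exact_mod_cast hlt)
    simp only [coe_Icc, Set.mem_Icc, show (2 * k + 1 + 1) / 2 = k + 1 by omega]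
    refine ⟨by omega, Nat.le_floor ?_⟩
    rw [← sub_le_iff_le_add, le_div_iff₀ (by positivity)]
    push_cast at hlog ⊢
    linarith
  · intro e he e' he' h
    obtain ⟨⟨k, rfl⟩, -⟩ := hs e he
    obtain ⟨⟨k', rfl⟩, -⟩ := hs e' he'
    simp only at h
    omega

theorem hyperD_prime_divisors_special_general (n r : ℕ) (hn : n ∈ ({3, 4, 6} : Set ℕ))
    (p : ℕ) (hp : p.Prime) (hdvd : p ∣ hyperD 1 n r) :
    p % n = n - 1 ∧
    (padicValNat p (hyperD 1 n r) : ℤ) ≤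
      ⌊Real.log ((n : ℝ) * r) / (2 * Real.log (p : ℝ)) + 1 / 2⌋ := by
  have : Fact p.Prime := ⟨hp⟩
  have : NeZero n := ⟨by rintro rfl; simp at hn⟩
  set S := exceptionalExponents n p r
  have hval : padicValNat p (hyperD 1 n r) ≤ #S := padicValNat_hyperD_le hn r
  have hS : ∀ e ∈ S, (p : ZMod n) = -1 ∧ Odd e ∧ p ^ e < n * r := fun e he => by
    simp only [S, exceptionalExponents, mem_filter, Nat.cast_pow] at he
    exact (ZMod.eq_neg_one_and_odd_of_pow_eq_neg_one hn he.2.1).imp_right fun hodd => ⟨hodd, he.2.2⟩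
  obtain ⟨e, he⟩ : S.Nonempty :=
    card_pos.mp ((one_le_padicValNat_of_dvd (hyperD_ne_zero 1 n r) hdvd).trans hval)
  refine ⟨(ZMod.natCast_eq_neg_one_iff p).mp (hS e he).1, ?_⟩
  calc (padicValNat p (hyperD 1 n r) : ℤ) ≤ #S := by exact_mod_cast hval
    _ ≤ _ := by simpa using card_le_floor_of_odd_of_pow_lt hp.one_lt S fun e he => (hS e he).2

/-- **Lemma 3(a).** For `m = 1` and `n ∈ {3, 4, 6}`: if a prime `p` divides
`D_{1,n,r}`, then `p ≡ n − 1 (mod n)` and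
`v_p(D_{1,n,r}) ≤ ⌊log(nr)/(2·log p) + 1/2⌋`. -/
theorem hyperD_prime_divisors_special (n r : ℕ) (hn : n ∈ ({3, 4, 6} : Set ℕ))
    (hr : 0 < r) (p : ℕ) (hp : p.Prime) (hdvd : p ∣ hyperD 1 n r) :
    p % n = n - 1 ∧
    (padicValNat p (hyperD 1 n r) : ℤ) ≤
      ⌊Real.log ((n : ℝ) * r) / (2 * Real.log (p : ℝ)) + 1 / 2⌋ :=
  hyperD_prime_divisors_special_general n r hn p hp hdvd
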